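/- Let D be a finite directed graph without self-loops, let u ∈ V(D) with d⁺(u) > 0 be such that D − N⁺[u] has at most d⁺(u) sources not present in D, let B' be a breakdown sequence for D − N⁺[u], and let Q' ⊆ F(B') be a constructive quasi-kernel with regard to B' and D − N⁺[u]. If there exists t ∈ Q' with t ⟶ u, then Q' is a constructive quasi-kernel with regard to the breakdown sequence (u,N⁺(u)),B' and D; otherwise Q' ∪ {u} is a constructive quasi-kernel with regard to (u,N⁺(u)),B' and D. -/

import Mathlib

/-- A finite directed graph without self-loops: a finite vertex set together with a
(decidable) arc relation whose arcs join vertices and which has no self-loops. -/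
structure FinDigraph (α : Type) [DecidableEq α] where
  verts : Finset α
  adj : α → α → Bool
  adj_mem_left : ∀ u v, adj u v = true → u ∈ verts
  adj_mem_right : ∀ u v, adj u v = true → v ∈ verts
  no_loops : ∀ u, adj u u = false

namespace FinDigraph

variable {α : Type} [DecidableEq α]

/-- The open out-neighborhood `N⁺(u)`. -/
def outNbhd (D : FinDigraph α) (u : α) : Finset α := D.verts.filter (fun v => D.adj u v)

/-- The closed out-neighborhood `N⁺[u] = N⁺(u) ∪ {u}`. -/
def closedNbhd (D : FinDigraph α) (u : α) : Finset α := insert u (D.outNbhd u)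

/-- The out-degree `d⁺(u) = |N⁺(u)|`. -/
def outDeg (D : FinDigraph α) (u : α) : ℕ := (D.outNbhd u).card

/-- `D − S`: the subgraph induced by `V(D) − S`. -/
def del (D : FinDigraph α) (S : Finset α) : FinDigraph α where
  verts := D.verts \ S
  adj := fun u v => D.adj u v && decide (u ∉ S) && decide (v ∉ S)
  adj_mem_left := by
    intro u v h
    simp only [Bool.and_eq_true, decide_eq_true_eq] at h
    exact Finset.mem_sdiff.2 ⟨D.adj_mem_left u v h.1.1, h.1.2⟩
  adj_mem_right := by
    intro u v h
    simp only [Bool.and_eq_true, decide_eq_true_eq] at h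
    exact Finset.mem_sdiff.2 ⟨D.adj_mem_right u v h.1.1, h.2⟩
  no_loops := by intro u; simp [D.no_loops u]

/-- A source: a vertex with no ingoing arc. -/
def IsSource (D : FinDigraph α) (u : α) : Prop := u ∈ D.verts ∧ ∀ v, D.adj v u = false

/-- The set of sources of `D`. -/
def sources (D : FinDigraph α) : Finset α :=
  D.verts.filter (fun u => ∀ v ∈ D.verts, D.adj v u = false)

/-- A quasi-kernel: an independent set `Q ⊆ V(D)` such that every vertex of `D`
is in `Q`, has an in-neighbor in `Q`, or is reachable in two steps from `Q`. -/
def IsQuasiKernel (D : FinDigraph α) (Q : Finset α) : Prop :=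
  Q ⊆ D.verts ∧
  (∀ u ∈ Q, ∀ v ∈ Q, D.adj u v = false) ∧
  (∀ w ∈ D.verts, w ∈ Q ∨ (∃ v ∈ Q, D.adj v w = true) ∨
    (∃ u ∈ Q, ∃ v, D.adj u v = true ∧ D.adj v w = true))

/-- Breakdown sequences (Definition 3 of the paper). -/
inductive IsBDS : FinDigraph α → List (α × Finset α) → Prop where
  | nil (D : FinDigraph α) : D.verts = ∅ → IsBDS D []
  | isolated (D : FinDigraph α) (u : α) (B : List (α × Finset α)) :
      (∀ x y, D.adj x y = false) → u ∈ D.verts →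
      IsBDS (D.del {u}) B → IsBDS D ((u, (∅ : Finset α)) :: B)
  | step (D : FinDigraph α) (u : α) (B : List (α × Finset α)) :
      u ∈ D.verts → 0 < D.outDeg u →
      ((D.del (D.closedNbhd u)).sources \ D.sources).card ≤ D.outDeg u →
      IsBDS (D.del (D.closedNbhd u)) B → IsBDS D ((u, D.outNbhd u) :: B)

/-- `F(B)`: the set of first components of the pairs in `B`. -/
def F (B : List (α × Finset α)) : Finset α := (B.map Prod.fst).toFinset

/-- A quasi-kernel `Q` is constructive with regard to `B` and `D`
(Definition 5 of the paper). -/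
def IsConstructive (D : FinDigraph α) (B : List (α × Finset α)) (Q : Finset α) : Prop :=
  IsQuasiKernel D Q ∧
  ∀ p ∈ B, p.1 ∈ Q ∨ (∃ v ∈ Q, D.adj v p.1 = true) ∨
    (p.2 = ∅ ∧ ∃ u v M, ((u : α), (M : Finset α)) ∈ B ∧ v ∈ M ∧ D.adj v p.1 = true)

end FinDigraph

/-!
Deleting `N⁺[u]` only removes arcs, so everything `Q'` achieves in `D − N⁺[u]` it still
achieves in `D`, and it stays independent there. What remains is `N⁺[u]` and the new pair
`(u, N⁺(u))`: if some `t ∈ Q'` has `t ⟶ u`, then `t` reaches `u` in one step and `N⁺(u)`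
in two; otherwise `u` has no arc to or from `Q'` (which avoids `N⁺[u]`), so `Q' ∪ {u}` is
still independent and reaches `N⁺(u)` in one step.
-/

namespace FinDigraph

variable {α : Type} [DecidableEq α] (D : FinDigraph α)

theorem mem_del_verts {S : Finset α} {w : α} :
    w ∈ (D.del S).verts ↔ w ∈ D.verts ∧ w ∉ S :=
  Finset.mem_sdiff

theorem del_adj_eq_true {S : Finset α} {a b : α} :
    (D.del S).adj a b = true ↔ D.adj a b = true ∧ a ∉ S ∧ b ∉ S := by
  simp [del, and_assoc]

theorem mem_outNbhd {u v : α} : v ∈ D.outNbhd u ↔ D.adj u v = true :=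
  ⟨fun h => (Finset.mem_filter.1 h).2,
    fun h => Finset.mem_filter.2 ⟨D.adj_mem_right u v h, h⟩⟩

theorem mem_closedNbhd {u v : α} : v ∈ D.closedNbhd u ↔ v = u ∨ D.adj u v = true := by
  rw [closedNbhd, Finset.mem_insert, mem_outNbhd]

theorem adj_eq_false_of_notMem_closedNbhd {u v : α} (hv : v ∉ D.closedNbhd u) :
    D.adj u v = false := by
  rw [mem_closedNbhd, not_or] at hv
  simpa using hv.2

def IsIndependent (Q : Finset α) : Prop := ∀ a ∈ Q, ∀ b ∈ Q, D.adj a b = false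

def IsReachedWithinTwo (Q : Finset α) (w : α) : Prop :=
  w ∈ Q ∨ (∃ v ∈ Q, D.adj v w = true) ∨ ∃ x ∈ Q, ∃ v, D.adj x v = true ∧ D.adj v w = true

variable {D}

theorem IsIndependent.of_del {S Q : Finset α} (hQ : Q ⊆ (D.del S).verts)
    (hind : (D.del S).IsIndependent Q) : D.IsIndependent Q := by
  intro a ha b hb
  by_contra hab
  have hS : ∀ q ∈ Q, q ∉ S := fun q hq => ((D.mem_del_verts).1 (hQ hq)).2
  have : (D.del S).adj a b = true :=
    (D.del_adj_eq_true).2 ⟨by simpa using hab, hS a ha, hS b hb⟩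
  simp [hind a ha b hb] at this

theorem IsIndependent.insert {Q : Finset α} {u : α} (hQ : D.IsIndependent Q)
    (hout : ∀ q ∈ Q, D.adj u q = false) (hin : ∀ q ∈ Q, D.adj q u = false) :
    D.IsIndependent (insert u Q) := by
  simp only [IsIndependent, Finset.forall_mem_insert]
  exact ⟨⟨D.no_loops u, hout⟩, fun a ha => ⟨hin a ha, hQ a ha⟩⟩

theorem IsReachedWithinTwo.of_del {S Q Q' : Finset α} {w : α}
    (h : (D.del S).IsReachedWithinTwo Q w) (hQQ' : Q ⊆ Q') : D.IsReachedWithinTwo Q' w := by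
  have lift := fun {a b} (hab : (D.del S).adj a b = true) => ((D.del_adj_eq_true).1 hab).1
  rcases h with hw | ⟨v, hv, hvw⟩ | ⟨x, hx, v, hxv, hvw⟩
  · exact Or.inl (hQQ' hw)
  · exact Or.inr (Or.inl ⟨v, hQQ' hv, lift hvw⟩)
  · exact Or.inr (Or.inr ⟨x, hQQ' hx, v, lift hxv, lift hvw⟩)

theorem isReachedWithinTwo_of_mem_closedNbhd {Q : Finset α} {u w : α}
    (hu : u ∈ Q ∨ ∃ v ∈ Q, D.adj v u = true) (hw : w ∈ D.closedNbhd u) :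
    D.IsReachedWithinTwo Q w := by
  rcases (D.mem_closedNbhd).1 hw with rfl | huw
  · rcases hu with hw | hvw
    · exact Or.inl hw
    · exact Or.inr (Or.inl hvw)
  · rcases hu with hu | ⟨v, hv, hvu⟩
    · exact Or.inr (Or.inl ⟨u, hu, huw⟩)
    · exact Or.inr (Or.inr ⟨v, hv, u, hvu, huw⟩)

theorem IsConstructive.pair_of_del {S Q Q' : Finset α} {B B'' : List (α × Finset α)}
    (hQ : (D.del S).IsConstructive B Q) (hQQ' : Q ⊆ Q') (hBB'' : B ⊆ B'')
    {p : α × Finset α} (hp : p ∈ B) :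
    p.1 ∈ Q' ∨ (∃ v ∈ Q', D.adj v p.1 = true) ∨
      (p.2 = ∅ ∧ ∃ u v M, ((u : α), (M : Finset α)) ∈ B'' ∧ v ∈ M ∧ D.adj v p.1 = true) := by
  have lift := fun {a b} (hab : (D.del S).adj a b = true) => ((D.del_adj_eq_true).1 hab).1
  rcases hQ.2 p hp with hp1 | ⟨v, hv, hvp⟩ | ⟨hp2, u, v, M, huM, hvM, hvp⟩
  · exact Or.inl (hQQ' hp1)
  · exact Or.inr (Or.inl ⟨v, hQQ' hv, lift hvp⟩)
  · exact Or.inr (Or.inr ⟨hp2, u, v, M, hBB'' huM, hvM, lift hvp⟩)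

theorem IsConstructive.cons_of_del_closedNbhd {u : α} {B : List (α × Finset α)}
    {Q Q' : Finset α} (hQ : (D.del (D.closedNbhd u)).IsConstructive B Q) (hQQ' : Q ⊆ Q')
    (hQ'V : Q' ⊆ D.verts) (hind : D.IsIndependent Q')
    (hu : u ∈ Q' ∨ ∃ v ∈ Q', D.adj v u = true) :
    D.IsConstructive ((u, D.outNbhd u) :: B) Q' := by
  refine ⟨⟨hQ'V, hind, fun w hw => ?_⟩, fun p hp => ?_⟩
  · by_cases hwu : w ∈ D.closedNbhd u
    · exact isReachedWithinTwo_of_mem_closedNbhd hu hwu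
    · exact IsReachedWithinTwo.of_del (hQ.1.2.2 w ((D.mem_del_verts).2 ⟨hw, hwu⟩)) hQQ'
  · rcases List.mem_cons.1 hp with rfl | hp
    · exact hu.imp id Or.inl
    · exact hQ.pair_of_del hQQ' (List.subset_cons_self _ _) hp

end FinDigraph

theorem constructive_step_general {α : Type} [DecidableEq α]
    (D : FinDigraph α) (u : α) (hu : u ∈ D.verts)
    (B' : List (α × Finset α))
    (Q' : Finset α)
    (hQ' : (D.del (D.closedNbhd u)).IsConstructive B' Q') :
    ((∃ t ∈ Q', D.adj t u = true) →
      D.IsConstructive ((u, D.outNbhd u) :: B') Q') ∧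
    (¬ (∃ t ∈ Q', D.adj t u = true) →
      D.IsConstructive ((u, D.outNbhd u) :: B') (insert u Q')) := by
  have hQ'del : ∀ q ∈ Q', q ∈ D.verts ∧ q ∉ D.closedNbhd u :=
    fun q hq => (D.mem_del_verts).1 (hQ'.1.1 hq)
  have hQ'V : Q' ⊆ D.verts := fun q hq => (hQ'del q hq).1
  have hind : D.IsIndependent Q' := FinDigraph.IsIndependent.of_del hQ'.1.1 hQ'.1.2.1
  refine ⟨fun ht => hQ'.cons_of_del_closedNbhd subset_rfl hQ'V hind (Or.inr ht), fun hnt => ?_⟩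
  have hout : ∀ q ∈ Q', D.adj u q = false :=
    fun q hq => D.adj_eq_false_of_notMem_closedNbhd (hQ'del q hq).2
  have hin : ∀ q ∈ Q', D.adj q u = false := fun q hq => by
    simpa using fun h => hnt ⟨q, hq, h⟩
  exact hQ'.cons_of_del_closedNbhd (Finset.subset_insert u Q')
    (Finset.insert_subset hu hQ'V) (hind.insert hout hin) (Or.inl (Finset.mem_insert_self u Q'))

/-- Let `u ∈ V(D)` with `d⁺(u) > 0` be such that `D − N⁺[u]` has at most
`d⁺(u)` new sources, let `B'` be a breakdown sequence for `D − N⁺[u]`, and let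
`Q' ⊆ F(B')` be a constructive quasi-kernel with regard to `B'` and `D − N⁺[u]`.
If some `t ∈ Q'` satisfies `t ⟶ u` then `Q'` is a constructive quasi-kernel with regard
to `(u,N⁺(u)),B'` and `D`; otherwise `Q' ∪ {u}` is. -/
theorem constructive_step {α : Type} [DecidableEq α]
    (D : FinDigraph α) (u : α) (hu : u ∈ D.verts) (hd : 0 < D.outDeg u)
    (hsrc : ((D.del (D.closedNbhd u)).sources \ D.sources).card ≤ D.outDeg u)
    (B' : List (α × Finset α)) (hB' : FinDigraph.IsBDS (D.del (D.closedNbhd u)) B')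
    (Q' : Finset α) (hQF : Q' ⊆ FinDigraph.F B')
    (hQ' : (D.del (D.closedNbhd u)).IsConstructive B' Q') :
    ((∃ t ∈ Q', D.adj t u = true) →
      D.IsConstructive ((u, D.outNbhd u) :: B') Q') ∧
    (¬ (∃ t ∈ Q', D.adj t u = true) →
      D.IsConstructive ((u, D.outNbhd u) :: B') (insert u Q')) :=
  constructive_step_general D u hu B' Q' hQ'
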